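/- arXiv:2603.02381 — 3 statements merged into one kernel-verified Lean document; each statement's English description precedes it below -/
import Mathlib

section
/- Let p ≥ 2 and ℓ≥1. For all ξ, η ∈ ℂ^ℓ one has C_p(ξ,η) ≥ c₁(p)|η|^p, where c₁(p) := inf over (s,t)∈ℝ²∖{(0,0)} of ([t² + s² + 2s + 1]^{p/2} − 1 − ps)/([t² + s²]^{p/2}). Moreover c₁(p) ∈ (0,1]. -/
open Real Complex

noncomputable section

/-- The `C_p`-functional on `ℂ^ℓ`:
`C_p(ξ,η) = |ξ|^p − |ξ−η|^p − p|ξ−η|^{p−2} Re⟨ξ−η, η⟩`.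
(When `ξ = η` the last term vanishes automatically since `Re⟨0,η⟩ = 0`.) -/
def Cp (p : ℝ) {ℓ : ℕ} (ξ η : EuclideanSpace ℂ (Fin ℓ)) : ℝ :=
  ‖ξ‖ ^ p - ‖ξ - η‖ ^ p - p * ‖ξ - η‖ ^ (p - 2) * (inner ℂ (ξ - η) η : ℂ).re

end

/-- The constant `c₁(p)`, as an infimum over `(s,t) ∈ ℝ² ∖ {(0,0)}`. -/
noncomputable def c1 (p : ℝ) : ℝ :=
  sInf {r : ℝ | ∃ s t : ℝ, (s, t) ≠ (0, 0) ∧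
    r = ((t ^ 2 + s ^ 2 + 2 * s + 1) ^ (p / 2) - 1 - p * s) / (t ^ 2 + s ^ 2) ^ (p / 2)}

/-!
Put `u = ξ - η`. For `u ≠ 0`, Cauchy–Schwarz yields `z ∈ ℂ` with `Re z = Re⟨u, η⟩ / ‖u‖²` and
`|z| = ‖η‖ / ‖u‖`; then `‖ξ‖ = ‖u‖ |1 + z|`, so `C_p(ξ, η) = ‖η‖^p Q(z)`, where `Q` is the quotient
defining `c₁(p)` at `(s, t) = (Re z, Im z)`. Hence `c₁(p) ‖η‖^p ≤ C_p(ξ, η)`.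
The bound `|1 + z|^p ≥ 1 + p Re z + 2^{1-p} |z|^p` gives `c₁(p) ≥ 2^{1-p} > 0`, and
`c₁(p) ≤ Q(-2) = 2p / 2^p ≤ 1`.
-/

lemma sq_rpow_div_two {x : ℝ} (hx : 0 ≤ x) (p : ℝ) : (x ^ 2) ^ (p / 2) = x ^ p := by
  rw [← rpow_natCast_mul hx]; norm_num [mul_div_cancel₀]

lemma rpow_add_one_div_two_le {q x : ℝ} (hq : 1 ≤ q) (hx : 0 ≤ x) :
    ((x + 1) / 2) ^ q ≤ (x ^ q + 1) / 2 := by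
  have := (convexOn_rpow hq).2 (Set.mem_Ici.2 hx) (Set.mem_Ici.2 zero_le_one)
    (by norm_num : (0 : ℝ) ≤ 1 / 2) (by norm_num : (0 : ℝ) ≤ 1 / 2) (by norm_num)
  simp only [smul_eq_mul, one_rpow] at this
  rwa [show 1 / 2 * x + 1 / 2 * 1 = (x + 1) / 2 by ring,
    show 1 / 2 * x ^ q + 1 / 2 * 1 = (x ^ q + 1) / 2 by ring] at this

lemma two_mul_le_two_rpow {p : ℝ} (hp : 2 ≤ p) : 2 * p ≤ 2 ^ p := by
  -- tangent line of `2 ^ p` at `p = 2`, using `log 2 ≥ 1 / 2`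
  have htangent : 1 + (p - 2) * Real.log 2 ≤ 2 ^ (p - 2) := by
    rw [rpow_def_of_pos two_pos]
    linarith [add_one_le_exp (Real.log 2 * (p - 2))]
  rw [rpow_sub two_pos, rpow_two] at htangent
  nlinarith [log_two_gt_d9]

namespace Complex

lemma norm_one_add_sq (z : ℂ) : ‖1 + z‖ ^ 2 = 1 + 2 * z.re + ‖z‖ ^ 2 := by
  simp only [Complex.sq_norm, normSq_apply, add_re, add_im, one_re, one_im]; ring

lemma norm_rpow_eq_sq_add_sq_rpow (z : ℂ) (p : ℝ) :
    ‖z‖ ^ p = (z.re ^ 2 + z.im ^ 2) ^ (p / 2) := by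
  rw [← sq_rpow_div_two (norm_nonneg z), Complex.sq_norm, normSq_apply]; ring_nf

lemma exists_re_eq_and_norm_eq {s r : ℝ} (hs : |s| ≤ r) : ∃ z : ℂ, z.re = s ∧ ‖z‖ = r := by
  have hr : 0 ≤ r := (abs_nonneg s).trans hs
  refine ⟨⟨s, √(r ^ 2 - s ^ 2)⟩, rfl, ?_⟩
  rw [norm_def, normSq_apply, ← sq, ← sq, sq_sqrt (by nlinarith [sq_abs s, abs_nonneg s]),
    add_sub_cancel, sqrt_sq hr]

lemma one_add_mul_re_le_norm_one_add_rpow {p : ℝ} (hp : 1 ≤ p) (z : ℂ) :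
    1 + p * z.re ≤ ‖1 + z‖ ^ p := by
  rcases le_or_gt (-1) z.re with h | h
  · calc 1 + p * z.re ≤ (1 + z.re) ^ p := one_add_mul_self_le_rpow_one_add h hp
      _ ≤ ‖1 + z‖ ^ p := by
        gcongr
        · linarith
        · simpa using re_le_norm (1 + z)
  · nlinarith [rpow_nonneg (norm_nonneg (1 + z)) p]

/-- Split `1 + z = (1 + z / 2) + z / 2`: the parallelogram law, then superadditivity and
convexity of `x ↦ x ^ (p / 2)`, bound `‖1 + z / 2‖ ^ p + ‖z / 2‖ ^ p` by the mean of
`‖1 + z‖ ^ p` and `1`, while Bernoulli's inequality bounds `‖1 + z / 2‖ ^ p` from below. -/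
lemma one_add_mul_re_add_le_norm_one_add_rpow {p : ℝ} (hp : 2 ≤ p) (z : ℂ) :
    1 + p * z.re + 2 ^ (1 - p) * ‖z‖ ^ p ≤ ‖1 + z‖ ^ p := by
  have hq : 1 ≤ p / 2 := by linarith
  have hpar : ‖1 + z / 2‖ ^ 2 + ‖z / 2‖ ^ 2 = (‖1 + z‖ ^ 2 + 1) / 2 := by
    have := parallelogram_law_with_norm ℝ (1 + z / 2) (z / 2)
    rw [add_assoc, add_halves, add_sub_cancel_right, norm_one] at this
    linarith
  have hsum : ‖1 + z / 2‖ ^ p + ‖z / 2‖ ^ p ≤ (‖1 + z‖ ^ p + 1) / 2 := calc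
    ‖1 + z / 2‖ ^ p + ‖z / 2‖ ^ p = (‖1 + z / 2‖ ^ 2) ^ (p / 2) + (‖z / 2‖ ^ 2) ^ (p / 2) := by
      rw [sq_rpow_div_two (norm_nonneg _), sq_rpow_div_two (norm_nonneg _)]
    _ ≤ ((‖1 + z‖ ^ 2 + 1) / 2) ^ (p / 2) := by
      rw [← hpar]; exact add_rpow_le_rpow_add (by positivity) (by positivity) hq
    _ ≤ ((‖1 + z‖ ^ 2) ^ (p / 2) + 1) / 2 := rpow_add_one_div_two_le hq (by positivity)
    _ = (‖1 + z‖ ^ p + 1) / 2 := by rw [sq_rpow_div_two (norm_nonneg _)]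
  have hbern : 1 + p * (z / 2).re ≤ ‖1 + z / 2‖ ^ p :=
    one_add_mul_re_le_norm_one_add_rpow (by linarith) (z / 2)
  have hhalf : 2 ^ (1 - p) * ‖z‖ ^ p = 2 * ‖z / 2‖ ^ p := by
    rw [norm_div, RCLike.norm_ofNat, div_rpow (norm_nonneg z) zero_le_two,
      rpow_sub two_pos, rpow_one]
    ring
  rw [div_ofNat_re] at hbern
  linarith

end Complex

/-- `c1 p` is the infimum of this quotient over `z = s + t i ≠ 0`. -/
noncomputable def c1Quotient (p : ℝ) (z : ℂ) : ℝ :=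
  (‖1 + z‖ ^ p - 1 - p * z.re) / ‖z‖ ^ p

lemma c1Quotient_mk (p s t : ℝ) :
    c1Quotient p ⟨s, t⟩ =
      ((t ^ 2 + s ^ 2 + 2 * s + 1) ^ (p / 2) - 1 - p * s) / (t ^ 2 + s ^ 2) ^ (p / 2) := by
  rw [c1Quotient, norm_rpow_eq_sq_add_sq_rpow, norm_rpow_eq_sq_add_sq_rpow]
  simp only [add_re, add_im, one_re, one_im]
  ring_nf

lemma c1_eq_sInf_image (p : ℝ) : c1 p = sInf (c1Quotient p '' {0}ᶜ) := by
  rw [c1]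
  congr 1
  ext r
  simp only [Set.mem_ofPred_eq, Set.mem_image, Set.mem_compl_singleton_iff]
  constructor
  · rintro ⟨s, t, hst, rfl⟩
    exact ⟨⟨s, t⟩, by simpa [Complex.ext_iff] using hst, c1Quotient_mk p s t⟩
  · rintro ⟨z, hz, rfl⟩
    exact ⟨z.re, z.im, by simpa [Complex.ext_iff] using hz, by rw [← c1Quotient_mk]⟩

section

variable {p : ℝ}

lemma two_rpow_one_sub_le_c1Quotient (hp : 2 ≤ p) {z : ℂ} (hz : z ≠ 0) :
    2 ^ (1 - p) ≤ c1Quotient p z := by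
  rw [c1Quotient, le_div_iff₀ (by positivity)]
  linarith [one_add_mul_re_add_le_norm_one_add_rpow hp z]

lemma c1_le_c1Quotient (hp : 2 ≤ p) {z : ℂ} (hz : z ≠ 0) : c1 p ≤ c1Quotient p z := by
  rw [c1_eq_sInf_image]
  refine csInf_le ⟨2 ^ (1 - p), ?_⟩ ⟨z, hz, rfl⟩
  rintro _ ⟨w, hw, rfl⟩
  exact two_rpow_one_sub_le_c1Quotient hp hw

lemma two_rpow_one_sub_le_c1 (hp : 2 ≤ p) : 2 ^ (1 - p) ≤ c1 p := by
  rw [c1_eq_sInf_image]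
  refine le_csInf ⟨_, 1, one_ne_zero, rfl⟩ ?_
  rintro _ ⟨w, hw, rfl⟩
  exact two_rpow_one_sub_le_c1Quotient hp hw

lemma c1_le_one (hp : 2 ≤ p) : c1 p ≤ 1 := by
  have hquot : c1Quotient p (-2) = 2 * p / 2 ^ p := by
    norm_num [c1Quotient, mul_comm]
  calc c1 p ≤ c1Quotient p (-2) := c1_le_c1Quotient hp (by norm_num)
    _ ≤ 1 := by
      rw [hquot, div_le_one (by positivity)]
      exact two_mul_le_two_rpow hp

end

section

variable {E : Type*} [NormedAddCommGroup E] [InnerProductSpace ℂ E]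

lemma exists_complex_re_mul_eq_and_norm_eq {u : E} (hu : u ≠ 0) (v : E) :
    ∃ z : ℂ, z.re * ‖u‖ ^ 2 = (inner ℂ u v).re ∧ ‖v‖ = ‖u‖ * ‖z‖ := by
  have hu' : 0 < ‖u‖ := norm_pos_iff.2 hu
  have hCS : |(inner ℂ u v).re / ‖u‖ ^ 2| ≤ ‖v‖ / ‖u‖ := by
    rw [abs_div, abs_of_pos (pow_pos hu' 2), div_le_div_iff₀ (by positivity) hu']
    nlinarith [abs_re_le_norm (inner ℂ u v), norm_inner_le_norm (𝕜 := ℂ) u v]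
  obtain ⟨z, hre, hnorm⟩ := Complex.exists_re_eq_and_norm_eq hCS
  refine ⟨z, ?_, ?_⟩
  · rw [hre]; field_simp
  · rw [hnorm]; field_simp

lemma norm_add_eq_mul_norm_one_add {u v : E} {z : ℂ}
    (hre : z.re * ‖u‖ ^ 2 = (inner ℂ u v).re) (hnorm : ‖v‖ = ‖u‖ * ‖z‖) :
    ‖u + v‖ = ‖u‖ * ‖1 + z‖ := by
  refine (sq_eq_sq₀ (norm_nonneg _) (by positivity)).1 ?_
  rw [norm_add_sq (𝕜 := ℂ), mul_pow, Complex.norm_one_add_sq, hnorm, RCLike.re_to_complex,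
    ← hre]
  ring

end

lemma Cp_self {p : ℝ} (hp : p ≠ 0) {ℓ : ℕ} (η : EuclideanSpace ℂ (Fin ℓ)) :
    Cp p η η = ‖η‖ ^ p := by
  simp [Cp, zero_rpow hp]

lemma Cp_zero_right (p : ℝ) {ℓ : ℕ} (ξ : EuclideanSpace ℂ (Fin ℓ)) : Cp p ξ 0 = 0 := by
  simp [Cp]

lemma Cp_eq_mul_c1Quotient {p : ℝ} {ℓ : ℕ} {ξ η : EuclideanSpace ℂ (Fin ℓ)} (hη : η ≠ 0) {z : ℂ}
    (hre : z.re * ‖ξ - η‖ ^ 2 = (inner ℂ (ξ - η) η).re) (hnorm : ‖η‖ = ‖ξ - η‖ * ‖z‖) :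
    Cp p ξ η = ‖η‖ ^ p * c1Quotient p z := by
  have hprod : 0 < ‖ξ - η‖ * ‖z‖ := hnorm ▸ norm_pos_iff.2 hη
  have hu : 0 < ‖ξ - η‖ := pos_of_mul_pos_left hprod (norm_nonneg _)
  have hz : 0 < ‖z‖ := pos_of_mul_pos_right hprod (norm_nonneg _)
  have hξ : ‖ξ‖ = ‖ξ - η‖ * ‖1 + z‖ := by
    simpa using norm_add_eq_mul_norm_one_add hre hnorm
  have hpow : ‖ξ - η‖ ^ (p - 2) * ‖ξ - η‖ ^ 2 = ‖ξ - η‖ ^ p := by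
    rw [← rpow_natCast, ← rpow_add hu]; norm_num
  rw [Cp, c1Quotient, hξ, hnorm, ← hre, mul_rpow hu.le hz.le, mul_rpow hu.le (norm_nonneg _)]
  field_simp
  linear_combination (-p * z.re) * hpow

theorem Cp_lower_bound_c1_general (p : ℝ) (hp : 2 ≤ p) (ℓ : ℕ) :
    (∀ ξ η : EuclideanSpace ℂ (Fin ℓ), c1 p * ‖η‖ ^ p ≤ Cp p ξ η) ∧
      c1 p ∈ Set.Ioc (0 : ℝ) 1 := by
  refine ⟨fun ξ η => ?_, (by positivity : (0 : ℝ) < 2 ^ (1 - p)).trans_le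
    (two_rpow_one_sub_le_c1 hp), c1_le_one hp⟩
  rcases eq_or_ne ξ η with rfl | hξη
  · rw [Cp_self (by linarith)]
    exact mul_le_of_le_one_left (by positivity) (c1_le_one hp)
  rcases eq_or_ne η 0 with rfl | hη
  · simp [Cp_zero_right, zero_rpow (by linarith : p ≠ 0)]
  obtain ⟨z, hre, hnorm⟩ := exists_complex_re_mul_eq_and_norm_eq (sub_ne_zero.2 hξη) η
  have hz : z ≠ 0 := by rintro rfl; simp [hη] at hnorm
  rw [Cp_eq_mul_c1Quotient hη hre hnorm, mul_comm]
  exact mul_le_mul_of_nonneg_left (c1_le_c1Quotient hp hz) (by positivity)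

/-- For `p ≥ 2` and `ℓ ≥ 1`, `C_p(ξ,η) ≥ c₁(p)|η|^p` for all `ξ, η ∈ ℂ^ℓ`,
and `c₁(p) ∈ (0, 1]`. -/
theorem Cp_lower_bound_c1 (p : ℝ) (hp : 2 ≤ p) (ℓ : ℕ) (hℓ : 1 ≤ ℓ) :
    (∀ ξ η : EuclideanSpace ℂ (Fin ℓ), c1 p * ‖η‖ ^ p ≤ Cp p ξ η) ∧
      c1 p ∈ Set.Ioc (0 : ℝ) 1 :=
  Cp_lower_bound_c1_general p hp ℓ
end

section
/- Let 1<p<2 and ℓ≥2. For all ξ, η ∈ ℂ^ℓ with (ξ,η) such that |ξ|+|ξ−η|>0 one has C_p(ξ,η) ≥ c₂(p)·|η|²/(|ξ|+|ξ−η|)^{2−p}, where c₂(p) := inf over (s,t)∈ℝ² with s²+t²>0 of ((t² + s² + 2s + 1)^{p/2} − 1 − ps)/((√(t² + s² + 2s + 1) + 1)^{p−2}(t² + s²)). Moreover c₂(p) ∈ (0, p(p−1)/2^{p−1}]. -/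
/-!
Put `L = |ξ - η|`, `s = Re⟨ξ - η, η⟩ / L²` and choose `t` with `s² + t² = |η|² / L²` (possible by
Cauchy–Schwarz). Then `|ξ|² / L² = t² + s² + 2s + 1`, and both sides of the inequality are `L^p`
times their values at `(s, t)`, so for `L > 0` the inequality is just `c₂(p) ≤` the quotient at
`(s, t)`; for `L = 0` it reduces to `c₂(p) ≤ 1`.

For the bounds on `c₂(p)`: the quotient at `(s, t) = (-1, 0)` is `p - 1`, and
`p - 1 ≤ p(p - 1) / 2^(p-1)` is Bernoulli's inequality `2^(p-1) ≤ p`. Conversely, with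
`B = √(t² + s² + 2s + 1) ≥ s + 1`, Taylor's formula with Lagrange remainder gives
`B^p - 1 - p(B - 1) ≥ p(p - 1)/2 · (B + 1)^(p-2) (B - 1)²`, and since `p(p - 1)(B + 1)^(p-2) ≤ p`
this bounds every quotient below by `p(p - 1)/2 > 0`.
-/

open Real Complex

noncomputable def c2 (p : ℝ) : ℝ :=
  sInf {r : ℝ | ∃ s t : ℝ, 0 < s ^ 2 + t ^ 2 ∧
    r = ((t ^ 2 + s ^ 2 + 2 * s + 1) ^ (p / 2) - 1 - p * s) /
      ((Real.sqrt (t ^ 2 + s ^ 2 + 2 * s + 1) + 1) ^ (p - 2) * (t ^ 2 + s ^ 2))}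

open Set

theorem taylor_mean_remainder_lagrange_hasDerivAt {f f' f'' : ℝ → ℝ} {x₀ x : ℝ} (hx : x₀ ≠ x)
    (hf : ∀ y ∈ uIcc x₀ x, HasDerivAt f (f' y) y) (hf'c : ContinuousOn f' (uIcc x₀ x))
    (hf' : ∀ y ∈ uIoo x₀ x, HasDerivAt f' (f'' y) y) :
    ∃ c ∈ uIoo x₀ x, f x - f x₀ - f' x₀ * (x - x₀) = f'' c / 2 * (x - x₀) ^ 2 := by
  -- Cauchy's mean value theorem for `y ↦ f x - f y - f' y * (x - y)` against `y ↦ (x - y) ^ 2`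
  have hφc : ContinuousOn (fun y ↦ f x - f y - f' y * (x - y)) (uIcc x₀ x) :=
    (continuousOn_const.sub fun y hy ↦ (hf y hy).continuousAt.continuousWithinAt).sub
      (hf'c.mul (continuousOn_const.sub continuousOn_id))
  have hφ : ∀ y ∈ uIoo x₀ x,
      HasDerivAt (fun y ↦ f x - f y - f' y * (x - y)) (-(f'' y * (x - y))) y := fun y hy ↦
    (((hasDerivAt_const y _).sub (hf y (uIoo_subset_uIcc_self hy))).sub
      ((hf' y hy).mul ((hasDerivAt_id' y).const_sub x))).congr_deriv (by ring)
  have hψ : ∀ y ∈ uIoo x₀ x, HasDerivAt (fun y ↦ (x - y) ^ 2) (-(2 * (x - y))) y := fun y _ ↦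
    (((hasDerivAt_id' y).const_sub x).pow 2).congr_deriv (by ring)
  obtain ⟨c, hc, h⟩ := exists_ratio_hasDerivAt_eq_ratio_slope _ _ (inf_lt_sup.2 hx) hφc hφ _ _
    (by fun_prop) hψ
  have hxc : x - c ≠ 0 := sub_ne_zero.2 (by rintro rfl; exact right_notMem_uIoo hc)
  refine ⟨c, hc, mul_right_cancel₀ (mul_ne_zero two_ne_zero hxc) ?_⟩
  rcases hx.lt_or_gt with hlt | hlt
  · rw [min_eq_left hlt.le, max_eq_right hlt.le] at h
    linear_combination -h
  · rw [min_eq_right hlt.le, max_eq_left hlt.le] at h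
    linear_combination h

theorem mul_rpow_mul_sq_le_rpow_sub_one_sub_mul {p B : ℝ} (hp1 : 1 ≤ p) (hp2 : p ≤ 2)
    (hB : 0 ≤ B) :
    p * (p - 1) / 2 * (B + 1) ^ (p - 2) * (B - 1) ^ 2 ≤ B ^ p - 1 - p * (B - 1) := by
  rcases eq_or_ne 1 B with rfl | hB1
  · simp
  have hpos : ∀ y ∈ uIoo 1 B, 0 < y := fun y hy ↦ (le_min zero_le_one hB).trans_lt hy.1
  have hf'' : ∀ y ∈ uIoo 1 B,
      HasDerivAt (fun x ↦ p * x ^ (p - 1)) (p * ((p - 1) * y ^ (p - 2))) y := fun y hy ↦ by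
      simpa [sub_sub, one_add_one_eq_two] using
        (Real.hasDerivAt_rpow_const (p := p - 1) (Or.inl (hpos y hy).ne')).const_mul p
  obtain ⟨c, hc, h⟩ := taylor_mean_remainder_lagrange_hasDerivAt hB1
    (fun y _ ↦ Real.hasDerivAt_rpow_const (Or.inr hp1))
    ((Real.continuous_rpow_const (by linarith)).continuousOn.const_smul p) hf''
  have hcB : c ≤ B + 1 := hc.2.le.trans (max_le (by linarith) (by linarith))
  have hmono : (B + 1) ^ (p - 2) ≤ c ^ (p - 2) :=
    Real.rpow_le_rpow_of_nonpos (hpos c hc) hcB (by linarith)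
  simp only [Real.one_rpow, mul_one] at h
  have hpp : 0 ≤ p * (p - 1) / 2 := by nlinarith
  calc p * (p - 1) / 2 * (B + 1) ^ (p - 2) * (B - 1) ^ 2
      ≤ p * (p - 1) / 2 * c ^ (p - 2) * (B - 1) ^ 2 :=
        mul_le_mul_of_nonneg_right (mul_le_mul_of_nonneg_left hmono hpp) (sq_nonneg _)
    _ = B ^ p - 1 - p * (B - 1) := by rw [h]; ring

theorem mul_rpow_mul_le_rpow_sub_one_sub_mul {p B s : ℝ} (hp1 : 1 ≤ p) (hp2 : p ≤ 2)
    (hB : 0 ≤ B) (hsB : s + 1 ≤ B) :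
    p * (p - 1) / 2 * (B + 1) ^ (p - 2) * (B ^ 2 - 2 * s - 1) ≤ B ^ p - 1 - p * s := by
  have hk : p * (p - 1) * (B + 1) ^ (p - 2) ≤ p := by
    have h1 : (B + 1) ^ (p - 2) ≤ 1 :=
      Real.rpow_le_one_of_one_le_of_nonpos (by linarith) (by linarith)
    have hpp : 0 ≤ p * (p - 1) := by nlinarith
    nlinarith [mul_le_mul_of_nonneg_left h1 hpp]
  -- `B ^ 2 - 2 * s - 1 = (B - 1) ^ 2 + 2 * (B - 1 - s)`
  linarith [mul_rpow_mul_sq_le_rpow_sub_one_sub_mul hp1 hp2 hB,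
    mul_le_mul_of_nonneg_right hk (sub_nonneg.2 hsB)]

noncomputable def c2Ratio (p s t : ℝ) : ℝ :=
  ((t ^ 2 + s ^ 2 + 2 * s + 1) ^ (p / 2) - 1 - p * s) /
    ((Real.sqrt (t ^ 2 + s ^ 2 + 2 * s + 1) + 1) ^ (p - 2) * (t ^ 2 + s ^ 2))

theorem c2Ratio_eq {p s t a : ℝ} (ha : 0 ≤ a) (h : a ^ 2 = t ^ 2 + s ^ 2 + 2 * s + 1) :
    c2Ratio p s t = (a ^ p - 1 - p * s) / ((a + 1) ^ (p - 2) * (t ^ 2 + s ^ 2)) := by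
  rw [c2Ratio, ← h, Real.sqrt_sq ha, ← Real.rpow_natCast, ← Real.rpow_mul ha]
  norm_num [mul_div_cancel₀ p two_ne_zero]

theorem mul_sub_one_div_two_le_c2Ratio {p s t : ℝ} (hp1 : 1 ≤ p) (hp2 : p ≤ 2)
    (hst : 0 < s ^ 2 + t ^ 2) : p * (p - 1) / 2 ≤ c2Ratio p s t := by
  have hu : 0 ≤ t ^ 2 + s ^ 2 + 2 * s + 1 := by nlinarith [sq_nonneg (s + 1)]
  have hB := Real.sq_sqrt hu
  have hsB : s + 1 ≤ Real.sqrt (t ^ 2 + s ^ 2 + 2 * s + 1) :=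
    Real.le_sqrt_of_sq_le (by nlinarith)
  rw [c2Ratio_eq (Real.sqrt_nonneg _) hB, le_div_iff₀ (mul_pos (by positivity) (by linarith))]
  have := mul_rpow_mul_le_rpow_sub_one_sub_mul hp1 hp2 (Real.sqrt_nonneg _) hsB
  rw [hB] at this
  linarith

theorem bddBelow_c2Ratio {p : ℝ} (hp1 : 1 ≤ p) (hp2 : p ≤ 2) :
    BddBelow {r : ℝ | ∃ s t : ℝ, 0 < s ^ 2 + t ^ 2 ∧ r = c2Ratio p s t} := by
  refine ⟨p * (p - 1) / 2, ?_⟩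
  rintro r ⟨s, t, hst, rfl⟩
  exact mul_sub_one_div_two_le_c2Ratio hp1 hp2 hst

theorem c2_le_c2Ratio {p s t : ℝ} (hp1 : 1 ≤ p) (hp2 : p ≤ 2) (hst : 0 < s ^ 2 + t ^ 2) :
    c2 p ≤ c2Ratio p s t :=
  csInf_le (bddBelow_c2Ratio hp1 hp2) ⟨s, t, hst, rfl⟩

theorem c2Ratio_neg_one_zero {p : ℝ} (hp : p ≠ 0) : c2Ratio p (-1) 0 = p - 1 := by
  rw [c2Ratio_eq le_rfl (by norm_num), Real.zero_rpow hp]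
  norm_num
  ring

theorem mul_sub_one_div_two_le_c2 {p : ℝ} (hp1 : 1 ≤ p) (hp2 : p ≤ 2) :
    p * (p - 1) / 2 ≤ c2 p := by
  refine le_csInf ⟨_, -1, 0, by norm_num, rfl⟩ ?_
  rintro r ⟨s, t, hst, rfl⟩
  exact mul_sub_one_div_two_le_c2Ratio hp1 hp2 hst

theorem c2_le_sub_one {p : ℝ} (hp1 : 1 ≤ p) (hp2 : p ≤ 2) : c2 p ≤ p - 1 :=
  c2Ratio_neg_one_zero (p := p) (by linarith) ▸ c2_le_c2Ratio hp1 hp2 (by norm_num)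

theorem two_rpow_sub_one_le {p : ℝ} (hp1 : 1 ≤ p) (hp2 : p ≤ 2) : (2 : ℝ) ^ (p - 1) ≤ p := by
  have := rpow_one_add_le_one_add_mul_self (s := 1) (by norm_num) (sub_nonneg.2 hp1)
    (by linarith)
  norm_num at this
  linarith

theorem c2_le_mul_div {p : ℝ} (hp1 : 1 ≤ p) (hp2 : p ≤ 2) :
    c2 p ≤ p * (p - 1) / 2 ^ (p - 1) := by
  rw [le_div_iff₀ (by positivity)]
  calc c2 p * 2 ^ (p - 1) ≤ (p - 1) * p :=
        mul_le_mul (c2_le_sub_one hp1 hp2) (two_rpow_sub_one_le hp1 hp2) (by positivity)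
          (by linarith)
    _ = p * (p - 1) := by ring

theorem c2_mul_div_rpow_le {p a s q : ℝ} (hp1 : 1 ≤ p) (hp2 : p ≤ 2) (ha : 0 ≤ a)
    (hsq : s ^ 2 ≤ q) (haq : a ^ 2 = 1 + 2 * s + q) :
    c2 p * q / (a + 1) ^ (2 - p) ≤ a ^ p - 1 - p * s := by
  rcases (sq_nonneg s).trans hsq |>.eq_or_lt with rfl | hq
  · have hs : s = 0 := by nlinarith
    have ha1 : a = 1 := by nlinarith
    simp [hs, ha1]
  set t := Real.sqrt (q - s ^ 2)
  have ht : t ^ 2 = q - s ^ 2 := Real.sq_sqrt (sub_nonneg.2 hsq)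
  have hc2 := c2_le_c2Ratio (s := s) (t := t) hp1 hp2 (by linarith)
  rw [c2Ratio_eq ha (by linarith), le_div_iff₀ (mul_pos (by positivity) (by linarith)),
    show t ^ 2 + s ^ 2 = q by linarith, ← neg_sub, Real.rpow_neg (by positivity)] at hc2
  exact (le_of_eq (by ring)).trans hc2

theorem c2_mul_sq_div_le_of_pos {p X L R N : ℝ} (hp1 : 1 ≤ p) (hp2 : p ≤ 2) (hX : 0 ≤ X)
    (hL : 0 < L) (hR : R ^ 2 ≤ L ^ 2 * N ^ 2) (hXsq : X ^ 2 = L ^ 2 + 2 * R + N ^ 2) :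
    c2 p * N ^ 2 / (X + L) ^ (2 - p) ≤ X ^ p - L ^ p - p * L ^ (p - 2) * R := by
  set a := X / L
  have hXa : X = L * a := (mul_div_cancel₀ X hL.ne').symm
  have hsq : (R / L ^ 2) ^ 2 ≤ N ^ 2 / L ^ 2 := by
    rw [div_pow, div_le_div_iff₀ (by positivity) (by positivity)]
    nlinarith [sq_nonneg L]
  have haq : a ^ 2 = 1 + 2 * (R / L ^ 2) + N ^ 2 / L ^ 2 := by
    simp only [a]
    field_simp
    linarith
  calc c2 p * N ^ 2 / (X + L) ^ (2 - p)
      = L ^ p * (c2 p * (N ^ 2 / L ^ 2) / (a + 1) ^ (2 - p)) := by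
        rw [hXa, show L * a + L = L * (a + 1) by ring, Real.mul_rpow hL.le (by positivity),
          Real.rpow_sub hL, Real.rpow_two]
        field_simp
    _ ≤ L ^ p * (a ^ p - 1 - p * (R / L ^ 2)) := by
        gcongr
        exact c2_mul_div_rpow_le hp1 hp2 (by positivity) hsq haq
    _ = X ^ p - L ^ p - p * L ^ (p - 2) * R := by
        rw [hXa, Real.mul_rpow hL.le (by positivity), Real.rpow_sub hL, Real.rpow_two]
        field_simp

theorem c2_mul_sq_div_le {p X L R N : ℝ} (hp1 : 1 ≤ p) (hp2 : p ≤ 2) (hX : 0 ≤ X)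
    (hL : 0 ≤ L) (hXL : 0 < X + L) (hR : R ^ 2 ≤ L ^ 2 * N ^ 2)
    (hXsq : X ^ 2 = L ^ 2 + 2 * R + N ^ 2) :
    c2 p * N ^ 2 / (X + L) ^ (2 - p) ≤ X ^ p - L ^ p - p * L ^ (p - 2) * R := by
  rcases hL.eq_or_lt with rfl | hL
  · have hR0 : R = 0 := by nlinarith
    have hN : N ^ 2 = X ^ 2 := by rw [hXsq, hR0]; ring
    rw [add_zero] at hXL
    rw [hN, hR0, add_zero, Real.zero_rpow (by linarith), mul_div_assoc, ← Real.rpow_natCast,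
      ← Real.rpow_sub hXL]
    norm_num
    exact mul_le_of_le_one_left (by positivity) (by linarith [c2_le_sub_one hp1 hp2])
  · exact c2_mul_sq_div_le_of_pos hp1 hp2 hX hL hR hXsq

theorem Cp_lower_bound_c2_general (p : ℝ) (hp1 : 1 < p) (hp2 : p < 2) (ℓ : ℕ) :
    (∀ ξ η : EuclideanSpace ℂ (Fin ℓ), 0 < ‖ξ‖ + ‖ξ - η‖ →
      c2 p * ‖η‖ ^ 2 / (‖ξ‖ + ‖ξ - η‖) ^ (2 - p) ≤ Cp p ξ η) ∧
      c2 p ∈ Set.Ioc (0 : ℝ) (p * (p - 1) / 2 ^ (p - 1)) := by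
  refine ⟨fun ξ η h ↦ ?_, ?_, c2_le_mul_div hp1.le hp2.le⟩
  · have hXsq : ‖ξ‖ ^ 2 = ‖ξ - η‖ ^ 2 + 2 * (inner ℂ (ξ - η) η).re + ‖η‖ ^ 2 := by
      have := norm_add_sq (𝕜 := ℂ) (ξ - η) η
      rwa [sub_add_cancel] at this
    have hCS : (inner ℂ (ξ - η) η).re ^ 2 ≤ ‖ξ - η‖ ^ 2 * ‖η‖ ^ 2 := by
      rw [← mul_pow, ← sq_abs]
      exact pow_le_pow_left₀ (abs_nonneg _)
        ((abs_re_le_norm _).trans (norm_inner_le_norm _ _)) 2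
    exact c2_mul_sq_div_le hp1.le hp2.le (norm_nonneg _) (norm_nonneg _) h hCS hXsq
  · exact (by nlinarith : (0 : ℝ) < p * (p - 1) / 2).trans_le
      (mul_sub_one_div_two_le_c2 hp1.le hp2.le)

/-- For `1 < p < 2` and `ℓ ≥ 2`, for all `ξ, η ∈ ℂ^ℓ` with `|ξ| + |ξ−η| > 0`,
`C_p(ξ,η) ≥ c₂(p)|η|²/(|ξ|+|ξ−η|)^{2−p}`, and `c₂(p) ∈ (0, p(p−1)/2^{p−1}]`. -/
theorem Cp_lower_bound_c2 (p : ℝ) (hp1 : 1 < p) (hp2 : p < 2) (ℓ : ℕ) (hℓ : 2 ≤ ℓ) :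
    (∀ ξ η : EuclideanSpace ℂ (Fin ℓ), 0 < ‖ξ‖ + ‖ξ - η‖ →
      c2 p * ‖η‖ ^ 2 / (‖ξ‖ + ‖ξ - η‖) ^ (2 - p) ≤ Cp p ξ η) ∧
      c2 p ∈ Set.Ioc (0 : ℝ) (p * (p - 1) / 2 ^ (p - 1)) :=
  Cp_lower_bound_c2_general p hp1 hp2 ℓ
end

section
/- Let 1<p<∞ and ℓ≥2. For ξ, η ∈ ℂ^ℓ one has C_p(ξ,η) = 0 if and only if η = 0. -/
/-!
`C_p(ξ, η)` is the gap between `‖·‖ ^ p` at `ξ` and its first-order Taylor polynomial at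
`ξ - η`. Along the direction `a = ξ - η` this is the tangent-line inequality for `t ↦ t ^ p`
(Bernoulli), and transversally Cauchy–Schwarz; strict convexity makes the gap positive unless
`η = 0`.
-/

open Real Complex

-- Bernoulli's inequality `1 + p h < (1 + h) ^ p` at `h = s / t - 1`, scaled by `t ^ p`.
lemma rpow_tangent_lt {p s t : ℝ} (hp : 1 < p) (hs : 0 ≤ s) (ht : 0 < t) (hst : s ≠ t) :
    t ^ p + p * t ^ (p - 1) * (s - t) < s ^ p := by
  have hu : 0 ≤ s / t := div_nonneg hs ht.le
  have hbern := one_add_mul_self_lt_rpow_one_add (s := s / t - 1) (by linarith)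
    (by rwa [sub_ne_zero, ne_eq, div_eq_one_iff_eq ht.ne']) hp
  rw [add_sub_cancel, div_rpow hs ht.le, lt_div_iff₀ (rpow_pos_of_pos ht p)] at hbern
  calc t ^ p + p * t ^ (p - 1) * (s - t) = (1 + p * (s / t - 1)) * t ^ p := by
        rw [rpow_sub_one ht.ne']; field_simp
    _ < s ^ p := hbern

section InnerProductSpace

variable {𝕜 E : Type*} [RCLike 𝕜] [NormedAddCommGroup E] [InnerProductSpace 𝕜 E]

lemma re_inner_sub_self_le (a x : E) :
    RCLike.re (inner 𝕜 a (x - a)) ≤ ‖a‖ * (‖x‖ - ‖a‖) := by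
  rw [inner_sub_right, map_sub, inner_self_eq_norm_sq]
  nlinarith [(RCLike.re_le_norm (inner 𝕜 a x)).trans (norm_inner_le_norm a x)]

lemma two_mul_re_inner_sub_self (a x : E) :
    2 * RCLike.re (inner 𝕜 a (x - a)) = ‖x‖ ^ 2 - ‖a‖ ^ 2 - ‖x - a‖ ^ 2 := by
  rw [@norm_sub_sq 𝕜, inner_sub_right, map_sub, inner_self_eq_norm_sq, ← inner_re_symm]
  ring

-- `p ‖a‖ ^ (p - 2) a` is the gradient of `‖·‖ ^ p` at `a`.
lemma norm_rpow_tangent_lt {p : ℝ} (hp : 1 < p) {a x : E} (hxa : x ≠ a) :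
    ‖a‖ ^ p + p * ‖a‖ ^ (p - 2) * RCLike.re (inner 𝕜 a (x - a)) < ‖x‖ ^ p := by
  rcases eq_or_ne a 0 with rfl | ha
  · simpa [zero_rpow (by positivity : p ≠ 0)] using rpow_pos_of_pos (norm_pos_iff.2 hxa) p
  have ht : 0 < ‖a‖ := norm_pos_iff.2 ha
  have hslope : 0 < p * ‖a‖ ^ (p - 2) := by positivity
  rcases eq_or_ne ‖x‖ ‖a‖ with hst | hst
  · have hneg : RCLike.re (inner 𝕜 a (x - a)) < 0 := by
      have hsq := two_mul_re_inner_sub_self (𝕜 := 𝕜) a x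
      rw [hst] at hsq
      nlinarith [norm_pos_iff.2 (sub_ne_zero.2 hxa)]
    rw [hst]
    linarith [mul_neg_of_pos_of_neg hslope hneg]
  have hgrad : p * ‖a‖ ^ (p - 2) * ‖a‖ = p * ‖a‖ ^ (p - 1) := by
    rw [mul_assoc, ← rpow_add_one ht.ne']; ring_nf
  calc ‖a‖ ^ p + p * ‖a‖ ^ (p - 2) * RCLike.re (inner 𝕜 a (x - a))
      ≤ ‖a‖ ^ p + p * ‖a‖ ^ (p - 2) * (‖a‖ * (‖x‖ - ‖a‖)) := by
        gcongr; exact re_inner_sub_self_le a x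
    _ = ‖a‖ ^ p + p * ‖a‖ ^ (p - 1) * (‖x‖ - ‖a‖) := by rw [← hgrad]; ring
    _ < ‖x‖ ^ p := rpow_tangent_lt hp (norm_nonneg x) ht hst

end InnerProductSpace

theorem Cp_eq_zero_iff_general (p : ℝ) (hp : 1 < p) (ℓ : ℕ)
    (ξ η : EuclideanSpace ℂ (Fin ℓ)) :
    Cp p ξ η = 0 ↔ η = 0 := by
  refine ⟨fun h => ?_, fun h => by simp [Cp, h]⟩
  by_contra hη
  have hlt := norm_rpow_tangent_lt (𝕜 := ℂ) hp (a := ξ - η) (x := ξ)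
    (by rwa [ne_eq, eq_comm, sub_eq_self])
  rw [sub_sub_cancel] at hlt
  simp only [Cp, RCLike.re_to_complex] at h hlt
  linarith

/-- For `1 < p < ∞` and `ℓ ≥ 2`, `C_p(ξ,η) = 0` iff `η = 0`. -/
theorem Cp_eq_zero_iff (p : ℝ) (hp : 1 < p) (ℓ : ℕ) (hℓ : 2 ≤ ℓ)
    (ξ η : EuclideanSpace ℂ (Fin ℓ)) :
    Cp p ξ η = 0 ↔ η = 0 :=
  Cp_eq_zero_iff_general p hp ℓ ξ η
end
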